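/- arXiv:2501.00503 — 2 statements merged into one kernel-verified Lean document; each statement's English description precedes it below -/
import Mathlib

section
/- Let f : ω → [0,∞) satisfy f(0) ≠ 0, ∑_{i∈ω} f(i) = ∞, and lim_{n→∞} f(n)/∑_{i<n} f(i) = 0. For n ≥ 1 let φ_{f,n}(A) = (∑_{i∈A∩[0,n)} f(i))/(∑_{i<n} f(i)), and define φ_f(A) = sup{φ_{f,n}(A) : n ≥ 1} and φ̄_f(A) = limsup_{n→∞} φ_{f,n}(A). Then φ_f is a σ-nonpathological lower semicontinuous submeasure, and φ̄_f is a nonpathological submeasure which is not lower semicontinuous. -/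
open Filter
open scoped ENNReal

/-- A submeasure on a set (type) `X`. -/
def IsSubmeasure {X : Type*} (φ : Set X → ℝ≥0∞) : Prop :=
  φ ∅ = 0 ∧ (∀ A B : Set X, A ⊆ B → φ A ≤ φ B) ∧ ∀ A B : Set X, φ (A ∪ B) ≤ φ A + φ B

/-- A (finitely additive) measure on `X`. -/
def IsFAMeasure {X : Type*} (μ : Set X → ℝ≥0∞) : Prop :=
  μ ∅ = 0 ∧ ∀ A B : Set X, Disjoint A B → μ (A ∪ B) = μ A + μ B

/-- A σ-measure on `X`: a measure that is countably additive on pairwise disjoint sequences. -/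
def IsSigmaMeasure {X : Type*} (μ : Set X → ℝ≥0∞) : Prop :=
  IsFAMeasure μ ∧ ∀ A : ℕ → Set X, (Pairwise fun m n => Disjoint (A m) (A n)) →
    μ (⋃ n, A n) = ∑' n, μ (A n)

/-- `hat φ A = sup { μ A : μ a measure with μ ≤ φ pointwise }`. -/
noncomputable def hat {X : Type*} (φ : Set X → ℝ≥0∞) (A : Set X) : ℝ≥0∞ :=
  ⨆ (μ : Set X → ℝ≥0∞) (_ : IsFAMeasure μ ∧ ∀ B, μ B ≤ φ B), μ A

/-- `hatSigma φ A = sup { μ A : μ a σ-measure with μ ≤ φ pointwise }`. -/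
noncomputable def hatSigma {X : Type*} (φ : Set X → ℝ≥0∞) (A : Set X) : ℝ≥0∞ :=
  ⨆ (μ : Set X → ℝ≥0∞) (_ : IsSigmaMeasure μ ∧ ∀ B, μ B ≤ φ B), μ A

/-- Lower semicontinuity of a submeasure. -/
def IsLSC {X : Type*} (φ : Set X → ℝ≥0∞) : Prop :=
  ∀ A : Set X, φ A = ⨆ (F : Set X) (_ : F ⊆ A ∧ F.Finite), φ F

/-- The ratio used in the degree of pathology, with the conventions
`∞/∞ = 0/0 = 1`, `a/0 = ∞` and `∞/a = ∞` for positive real `a`. -/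
noncomputable def pratio (a b : ℝ≥0∞) : ℝ≥0∞ :=
  if (a = 0 ∧ b = 0) ∨ (a = ⊤ ∧ b = ⊤) then 1 else a / b

/-- The degree of pathology. -/
noncomputable def degP {X : Type*} (φ : Set X → ℝ≥0∞) : ℝ≥0∞ :=
  ⨆ A : Set X, pratio (φ A) (hat φ A)

/-- The σ-degree of pathology. -/
noncomputable def degPSigma {X : Type*} (φ : Set X → ℝ≥0∞) : ℝ≥0∞ :=
  ⨆ A : Set X, pratio (φ A) (hatSigma φ A)

/-- The Fin-degree of pathology. -/
noncomputable def degPFin {X : Type*} (φ : Set X → ℝ≥0∞) : ℝ≥0∞ :=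
  ⨆ (A : Set X) (_ : A.Finite), pratio (φ A) (hat φ A)

/-- The normalized partial-sum measure `φ_{f,n}`. -/
noncomputable def phiFN (f : ℕ → ℝ) (n : ℕ) (A : Set ℕ) : ℝ≥0∞ :=
  ENNReal.ofReal ((∑ i ∈ Finset.range n, A.indicator f i) / ∑ i ∈ Finset.range n, f i)

/-- `φ_f A = sup { φ_{f,n} A : n ≥ 1 }`. -/
noncomputable def phiF (f : ℕ → ℝ) (A : Set ℕ) : ℝ≥0∞ :=
  ⨆ (n : ℕ) (_ : 1 ≤ n), phiFN f n A

/-- `φ̄_f A = limsup_{n → ∞} φ_{f,n} A`. -/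
noncomputable def phiBarF (f : ℕ → ℝ) (A : Set ℕ) : ℝ≥0∞ :=
  Filter.limsup (fun n => phiFN f n A) Filter.atTop

/-!
Each `φ_{f,n}` is the measure with weight `f i / ∑_{j<n} f j` at every `i < n`: a σ-measure
carried by a finite set. Hence their supremum `φ_f` is a lower semicontinuous submeasure, and the
`φ_{f,n}` themselves are σ-measures below `φ_f` realising it. For `φ̄_f`, given `c < φ̄_f(A)`, pass
to an ultrafilter refining `{n | c < φ_{f,n}(A)}`: along it the `φ_{f,n}` converge, in the compact
space `[0,∞]`, to a finitely additive measure below `φ̄_f` which is `≥ c` at `A`. So `φ̄_f` is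
nonpathological, hence a submeasure. As `∑ f = ∞`, `φ̄_f` vanishes on finite sets, while
`φ̄_f(ω) = 1`.
-/

open MeasureTheory Topology

section General

variable {X : Type*}

theorem IsFAMeasure.isSubmeasure {μ : Set X → ℝ≥0∞} (hμ : IsFAMeasure μ) : IsSubmeasure μ := by
  have mono : ∀ A B : Set X, A ⊆ B → μ A ≤ μ B := fun A B hAB => by
    rw [← Set.union_sdiff_cancel hAB, hμ.2 _ _ disjoint_sdiff_self_right]
    exact le_self_add
  refine ⟨hμ.1, mono, fun A B => ?_⟩
  rw [← Set.union_sdiff_self, hμ.2 _ _ disjoint_sdiff_self_right]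
  exact add_le_add_right (mono _ _ Set.sdiff_subset) _

theorem isSigmaMeasure_measure [MeasurableSpace X] [DiscreteMeasurableSpace X] (μ : Measure X) :
    IsSigmaMeasure (μ ·) :=
  ⟨⟨measure_empty, fun _ _ hAB => measure_union hAB .of_discrete⟩,
    fun _ hA => measure_iUnion hA fun _ => .of_discrete⟩

theorem IsSubmeasure.iSup {ι : Sort*} {φ : ι → Set X → ℝ≥0∞} (hφ : ∀ i, IsSubmeasure (φ i)) :
    IsSubmeasure fun A => ⨆ i, φ i A :=
  ⟨ENNReal.iSup_eq_zero.2 fun i => (hφ i).1,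
    fun _ _ hAB => iSup_mono fun i => (hφ i).2.1 _ _ hAB,
    fun A B => iSup_le fun i => ((hφ i).2.2 A B).trans
      (add_le_add (le_iSup (φ · A) i) (le_iSup (φ · B) i))⟩

theorem IsLSC.iSup {ι : Sort*} {φ : ι → Set X → ℝ≥0∞} (hφ : ∀ i, IsLSC (φ i)) :
    IsLSC fun A => ⨆ i, φ i A := by
  intro A
  change ⨆ i, φ i A = _
  conv_lhs => enter [1, i]; rw [hφ i A]
  exact iSup_comm.trans (iSup_congr fun _ => iSup_comm)

theorem IsSubmeasure.isLSC_of_inter_finite {φ : Set X → ℝ≥0∞} (hφ : IsSubmeasure φ) {K : Set X}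
    (hK : K.Finite) (hφK : ∀ A, φ (A ∩ K) = φ A) : IsLSC φ := fun A =>
  le_antisymm ((hφK A).symm.trans_le <|
      le_iSup₂_of_le (A ∩ K) ⟨Set.inter_subset_left, hK.inter_of_right A⟩ le_rfl)
    (iSup₂_le fun _ hF => hφ.2.1 _ _ hF.1)

theorem isSubmeasure_hat (φ : Set X → ℝ≥0∞) : IsSubmeasure (hat φ) :=
  IsSubmeasure.iSup fun _ => IsSubmeasure.iSup fun hμ => hμ.1.isSubmeasure

theorem IsFAMeasure.of_tendsto {ι : Type*} {l : Filter ι} [l.NeBot] {μ : ι → Set X → ℝ≥0∞}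
    {ν : Set X → ℝ≥0∞} (hμ : ∀ i, IsFAMeasure (μ i)) (hν : ∀ B, Tendsto (μ · B) l (𝓝 (ν B))) :
    IsFAMeasure ν := by
  refine ⟨tendsto_nhds_unique (hν ∅) ?_, fun A B hAB => tendsto_nhds_unique (hν (A ∪ B)) ?_⟩
  · simpa only [fun i => (hμ i).1] using tendsto_const_nhds
  · simpa only [fun i => (hμ i).2 A B hAB] using (hν A).add (hν B)

theorem hat_limsup_eq {ι : Type*} {l : Filter ι} {μ : ι → Set X → ℝ≥0∞}
    (hμ : ∀ i, IsFAMeasure (μ i)) (A : Set X) :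
    hat (fun B => limsup (μ · B) l) A = limsup (μ · A) l := by
  refine le_antisymm (iSup₂_le fun ν hν => hν.2 A) (le_of_forall_lt_imp_le_of_dense fun c hc => ?_)
  have : (l ⊓ 𝓟 {i | c < μ i A}).NeBot :=
    frequently_iff_neBot.1 (frequently_lt_of_lt_limsup (by isBoundedDefault) hc)
  obtain ⟨U, hU⟩ := exists_ultrafilter_le (l ⊓ 𝓟 {i | c < μ i A})
  let ν B := (U.map (μ · B)).lim
  have hν : ∀ B, Tendsto (μ · B) U (𝓝 (ν B)) := fun B => (U.map (μ · B)).le_nhds_lim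
  have hν_below : IsFAMeasure ν ∧ ∀ B, ν B ≤ limsup (μ · B) l := ⟨.of_tendsto hμ hν, fun B =>
    (hν B).limsup_eq ▸ limsup_le_limsup_of_le (hU.trans inf_le_left)⟩
  have hc : c ≤ ν A := ge_of_tendsto (hν A) <| by
    filter_upwards [hU (mem_inf_of_right (mem_principal_self _))] with i hi using hi.le
  exact hc.trans (le_iSup₂ (f := fun ν (_ : IsFAMeasure ν ∧ ∀ B, ν B ≤ limsup (μ · B) l) => ν A)
    ν hν_below)

end General

section PartialSums

variable {f : ℕ → ℝ}

theorem phiFN_eq_sum_dirac (hf : ∀ n, 0 ≤ f n) (n : ℕ) :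
    phiFN f n = ⇑(∑ i ∈ Finset.range n,
      ENNReal.ofReal (f i / ∑ j ∈ Finset.range n, f j) • Measure.dirac i) := by
  funext A
  rw [phiFN, Measure.finsetSum_apply, Finset.sum_div, ENNReal.ofReal_sum_of_nonneg fun i _ =>
    div_nonneg (Set.indicator_nonneg (fun j _ => hf j) i) (Finset.sum_nonneg fun j _ => hf j)]
  refine Finset.sum_congr rfl fun i _ => ?_
  by_cases hi : i ∈ A <;> simp [hi]

theorem isSigmaMeasure_phiFN (hf : ∀ n, 0 ≤ f n) (n : ℕ) : IsSigmaMeasure (phiFN f n) :=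
  phiFN_eq_sum_dirac hf n ▸ isSigmaMeasure_measure _

theorem phiFN_inter_Iio (A : Set ℕ) (n : ℕ) : phiFN f n (A ∩ Set.Iio n) = phiFN f n A := by
  unfold phiFN
  congr 2
  refine Finset.sum_congr rfl fun i hi => ?_
  by_cases h : i ∈ A <;> simp [h, Finset.mem_range.1 hi]

theorem isLSC_phiFN (hf : ∀ n, 0 ≤ f n) (n : ℕ) : IsLSC (phiFN f n) :=
  (isSigmaMeasure_phiFN hf n).1.isSubmeasure.isLSC_of_inter_finite (Set.finite_Iio n)
    fun A => phiFN_inter_Iio A n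

theorem phiFN_univ (hf : ∀ n, 0 ≤ f n) (h0 : f 0 ≠ 0) {n : ℕ} (hn : 1 ≤ n) :
    phiFN f n Set.univ = 1 := by
  have hS : 0 < ∑ i ∈ Finset.range n, f i :=
    ((hf 0).lt_of_ne h0.symm).trans_le
      (Finset.single_le_sum (fun i _ => hf i) (Finset.mem_range.2 hn))
  simp [phiFN, div_self hS.ne']

theorem tendsto_phiFN_of_finite (hf : ∀ n, 0 ≤ f n) (hdiv : ¬ Summable f) {F : Set ℕ}
    (hF : F.Finite) : Tendsto (phiFN f · F) atTop (𝓝 0) := by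
  have hS : Tendsto (fun n => ∑ i ∈ Finset.range n, f i) atTop atTop :=
    (not_summable_iff_tendsto_nat_atTop_of_nonneg hf).1 hdiv
  have hnum : ∀ n, ∑ i ∈ Finset.range n, F.indicator f i ≤ ∑ i ∈ hF.toFinset, f i := fun n => by
    classical
    rw [Finset.sum_indicator_eq_sum_filter]
    exact Finset.sum_le_sum_of_subset_of_nonneg (fun i hi => hF.mem_toFinset.2
      (Finset.mem_filter.1 hi).2) fun i _ _ => hf i
  have hbound : Tendsto (fun n => ENNReal.ofReal ((∑ i ∈ hF.toFinset, f i) /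
      ∑ i ∈ Finset.range n, f i)) atTop (𝓝 0) := by
    simpa using ENNReal.tendsto_ofReal (tendsto_const_nhds.div_atTop hS)
  refine tendsto_of_tendsto_of_tendsto_of_le_of_le tendsto_const_nhds hbound (fun _ => zero_le)
    fun n => ENNReal.ofReal_le_ofReal ?_
  exact div_le_div_of_nonneg_right (hnum n) (Finset.sum_nonneg fun i _ => hf i)

end PartialSums

section Phi

variable {f : ℕ → ℝ}

theorem isSubmeasure_phiF (hf : ∀ n, 0 ≤ f n) : IsSubmeasure (phiF f) :=
  IsSubmeasure.iSup fun n => IsSubmeasure.iSup fun _ => (isSigmaMeasure_phiFN hf n).1.isSubmeasure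

theorem isLSC_phiF (hf : ∀ n, 0 ≤ f n) : IsLSC (phiF f) :=
  IsLSC.iSup fun n => IsLSC.iSup fun _ => isLSC_phiFN hf n

theorem hatSigma_phiF (hf : ∀ n, 0 ≤ f n) (A : Set ℕ) : hatSigma (phiF f) A = phiF f A :=
  le_antisymm (iSup₂_le fun _ hμ => hμ.2 A) <| iSup₂_le fun n hn =>
    le_iSup₂_of_le (phiFN f n) ⟨isSigmaMeasure_phiFN hf n,
      fun B => le_iSup₂ (f := fun m (_ : 1 ≤ m) => phiFN f m B) n hn⟩ le_rfl

theorem hat_phiBarF (hf : ∀ n, 0 ≤ f n) (A : Set ℕ) : hat (phiBarF f) A = phiBarF f A :=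
  hat_limsup_eq (fun n => (isSigmaMeasure_phiFN hf n).1) A

theorem isSubmeasure_phiBarF (hf : ∀ n, 0 ≤ f n) : IsSubmeasure (phiBarF f) :=
  funext (hat_phiBarF hf) ▸ isSubmeasure_hat _

theorem not_isLSC_phiBarF (hf : ∀ n, 0 ≤ f n) (h0 : f 0 ≠ 0) (hdiv : ¬ Summable f) :
    ¬ IsLSC (phiBarF f) := by
  intro hlsc
  have h_univ : phiBarF f Set.univ = 1 := by
    rw [phiBarF, limsup_congr ((eventually_ge_atTop 1).mono fun n hn => phiFN_univ hf h0 hn),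
      limsup_const]
  have h_finite : ∀ F : Set ℕ, F.Finite → phiBarF f F = 0 := fun F hF =>
    (tendsto_phiFN_of_finite hf hdiv hF).limsup_eq
  rw [hlsc, iSup₂_eq_bot.2 fun F hF => h_finite F hF.2] at h_univ
  exact zero_ne_one h_univ

end Phi

theorem stmt8_general (f : ℕ → ℝ) (hpos : ∀ n, 0 ≤ f n) (h0 : f 0 ≠ 0) (hdiv : ¬ Summable f) :
    IsSubmeasure (phiF f) ∧ IsLSC (phiF f) ∧ (∀ A, hatSigma (phiF f) A = phiF f A) ∧
    IsSubmeasure (phiBarF f) ∧ (∀ A, hat (phiBarF f) A = phiBarF f A) ∧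
    ¬ IsLSC (phiBarF f) :=
  ⟨isSubmeasure_phiF hpos, isLSC_phiF hpos, hatSigma_phiF hpos,
    isSubmeasure_phiBarF hpos, hat_phiBarF hpos, not_isLSC_phiBarF hpos h0 hdiv⟩

/-- For `f : ω → [0,∞)` with `f 0 ≠ 0`, `∑ f = ∞` and `f n / ∑_{i<n} f i → 0`:
`φ_f` is a σ-nonpathological lsc submeasure, and `φ̄_f` is a nonpathological submeasure
which is not lsc. -/
theorem stmt8 (f : ℕ → ℝ) (hpos : ∀ n, 0 ≤ f n) (h0 : f 0 ≠ 0) (hdiv : ¬ Summable f)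
    (hlim : Tendsto (fun n => f n / ∑ i ∈ Finset.range n, f i) atTop (nhds 0)) :
    IsSubmeasure (phiF f) ∧ IsLSC (phiF f) ∧ (∀ A, hatSigma (phiF f) A = phiF f A) ∧
    IsSubmeasure (phiBarF f) ∧ (∀ A, hat (phiBarF f) A = phiBarF f A) ∧
    ¬ IsLSC (phiBarF f) :=
  stmt8_general f hpos h0 hdiv
end

section
/- For every submeasure φ on a set X, 1 ≤ P_Fin(φ) ≤ P(φ) ≤ P_σ(φ) ≤ ∞. Moreover, if φ is a lower semicontinuous submeasure on ω, then P_Fin(φ) = P(φ) = P_σ(φ), and φ is nonpathological if and only if P_Fin(φ) = 1. -/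
open Filter
open scoped ENNReal

/-! The three degrees of pathology are suprema of the same ratio `φ A / μ A` against smaller and
smaller families of measures `μ ≤ φ`, which gives the chain of inequalities. For a lower
semicontinuous `ψ`, `ψ A` is the supremum of `ψ F` over finite `F ⊆ A`, so every ratio is
dominated by ratios on finite sets; and on a finite set `F` a measure `μ ≤ ψ` may be replaced by
`B ↦ μ (B ∩ F)`, which is countably additive because a disjoint sequence meets `F` in only
finitely many terms. Hence all three degrees coincide, and `P ψ = 1` says exactly `ψ ≤ ψ̂`. -/

namespace IsFAMeasure

variable {X : Type*} {μ : Set X → ℝ≥0∞}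

lemma mono (hμ : IsFAMeasure μ) {A B : Set X} (h : A ⊆ B) : μ A ≤ μ B := by
  rw [← Set.union_sdiff_cancel h, hμ.2 A (B \ A) disjoint_sdiff_self_right]
  exact le_self_add

lemma restrict (hμ : IsFAMeasure μ) (F : Set X) : IsFAMeasure fun B => μ (B ∩ F) := by
  refine ⟨by simpa using hμ.1, fun A B hAB => ?_⟩
  simp only [Set.union_inter_distrib_right]
  exact hμ.2 _ _ (hAB.mono Set.inter_subset_left Set.inter_subset_left)

lemma biUnion_finset (hμ : IsFAMeasure μ) {ι : Type*} (s : Finset ι) {B : ι → Set X}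
    (hB : Pairwise fun m n => Disjoint (B m) (B n)) :
    μ (⋃ i ∈ s, B i) = ∑ i ∈ s, μ (B i) := by
  classical
  induction s using Finset.induction_on with
  | empty => simpa using hμ.1
  | insert a s ha ih =>
    rw [Finset.set_biUnion_insert, Finset.sum_insert ha, ← ih]
    refine hμ.2 _ _ (Set.disjoint_iUnion₂_right.2 fun i hi => hB ?_)
    rintro rfl
    exact ha hi

lemma isSigmaMeasure_restrict_of_finite (hμ : IsFAMeasure μ) {F : Set X} (hF : F.Finite) :
    IsSigmaMeasure fun B => μ (B ∩ F) := by
  refine ⟨hμ.restrict F, fun A hA => ?_⟩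
  have hmeets : {n | (A n ∩ F).Nonempty}.Finite := by
    refine (hF.biUnion fun x _ => Set.Subsingleton.finite (s := {n | x ∈ A n}) ?_).subset ?_
    · intro m hm n hn
      by_contra hmn
      exact Set.disjoint_left.1 (hA hmn) hm hn
    · rintro n ⟨x, hxA, hxF⟩
      exact Set.mem_biUnion hxF hxA
  have hunion : (⋃ n, A n) ∩ F = ⋃ n ∈ hmeets.toFinset, A n ∩ F := by
    ext x
    simp only [Set.mem_inter_iff, Set.mem_iUnion, Set.Finite.mem_toFinset, Set.mem_ofPred_eq,
      exists_prop]
    exact ⟨fun ⟨⟨n, hn⟩, hx⟩ => ⟨n, ⟨x, hn, hx⟩, hn, hx⟩, fun ⟨n, _, hn, hx⟩ => ⟨⟨n, hn⟩, hx⟩⟩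
  have hzero : ∀ n ∉ hmeets.toFinset, μ (A n ∩ F) = 0 := by
    intro n hn
    rw [Set.Finite.mem_toFinset, Set.mem_ofPred_eq, Set.not_nonempty_iff_eq_empty] at hn
    rw [hn, hμ.1]
  simp only [hunion, tsum_eq_sum hzero]
  exact hμ.biUnion_finset _ fun m n hmn =>
    (hA hmn).mono Set.inter_subset_left Set.inter_subset_left

end IsFAMeasure

section Hat

variable {X : Type*} (φ : Set X → ℝ≥0∞)

lemma le_hat {μ : Set X → ℝ≥0∞} (hμ : IsFAMeasure μ) (hle : ∀ B, μ B ≤ φ B) (A : Set X) :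
    μ A ≤ hat φ A :=
  le_iSup₂ (f := fun (μ : Set X → ℝ≥0∞) (_ : IsFAMeasure μ ∧ ∀ B, μ B ≤ φ B) => μ A) μ ⟨hμ, hle⟩

lemma le_hatSigma {μ : Set X → ℝ≥0∞} (hμ : IsSigmaMeasure μ) (hle : ∀ B, μ B ≤ φ B)
    (A : Set X) : μ A ≤ hatSigma φ A :=
  le_iSup₂ (f := fun (μ : Set X → ℝ≥0∞) (_ : IsSigmaMeasure μ ∧ ∀ B, μ B ≤ φ B) => μ A)
    μ ⟨hμ, hle⟩

lemma hat_le_self (A : Set X) : hat φ A ≤ φ A :=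
  iSup₂_le fun _ hμ => hμ.2 A

lemma hat_mono {A B : Set X} (h : A ⊆ B) : hat φ A ≤ hat φ B :=
  iSup₂_le fun _ hμ => (hμ.1.mono h).trans (le_hat φ hμ.1 hμ.2 B)

lemma hatSigma_mono {A B : Set X} (h : A ⊆ B) : hatSigma φ A ≤ hatSigma φ B :=
  iSup₂_le fun _ hμ => (hμ.1.1.mono h).trans (le_hatSigma φ hμ.1 hμ.2 B)

lemma hatSigma_le_hat (A : Set X) : hatSigma φ A ≤ hat φ A :=
  iSup₂_le fun _ hμ => le_hat φ hμ.1.1 hμ.2 A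

lemma hat_le_hatSigma_of_finite {F : Set X} (hF : F.Finite) : hat φ F ≤ hatSigma φ F :=
  iSup₂_le fun μ hμ => by
    simpa using le_hatSigma φ (hμ.1.isSigmaMeasure_restrict_of_finite hF)
      (fun B => (hμ.1.mono Set.inter_subset_left).trans (hμ.2 B)) F

lemma hat_empty : hat φ ∅ = 0 :=
  nonpos_iff_eq_zero.1 (iSup₂_le fun _ hμ => hμ.1.1.le)

end Hat

lemma pratio_self (a : ℝ≥0∞) : pratio a a = 1 := by
  unfold pratio
  split_ifs with h
  · rfl
  · simp only [and_self, not_or] at h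
    exact ENNReal.div_self h.1 h.2

lemma one_le_pratio_zero (a : ℝ≥0∞) : 1 ≤ pratio a 0 := by
  rcases eq_or_ne a 0 with rfl | ha
  · simp [pratio]
  · simp [pratio, ha, ENNReal.div_zero ha]

lemma one_le_pratio_top (b : ℝ≥0∞) : 1 ≤ pratio ⊤ b := by
  rcases eq_or_ne b ⊤ with rfl | hb
  · simp [pratio]
  · simp [pratio, hb, ENNReal.top_div_of_ne_top hb]

lemma div_le_pratio (a b : ℝ≥0∞) : a / b ≤ pratio a b := by
  unfold pratio
  split_ifs with h
  · rcases h with ⟨rfl, rfl⟩ | ⟨rfl, rfl⟩ <;> simp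
  · exact le_rfl

lemma pratio_anti (a : ℝ≥0∞) {b b' : ℝ≥0∞} (h : b' ≤ b) : pratio a b ≤ pratio a b' := by
  rw [pratio]
  split_ifs with hab
  · rcases hab with ⟨rfl, rfl⟩ | ⟨rfl, rfl⟩
    · exact nonpos_iff_eq_zero.1 h ▸ one_le_pratio_zero 0
    · exact one_le_pratio_top b'
  · exact (ENNReal.div_le_div_left h a).trans (div_le_pratio a b')

lemma le_of_pratio_le_one {a b : ℝ≥0∞} (h : pratio a b ≤ 1) : a ≤ b := by
  unfold pratio at h
  split_ifs at h with hab
  · rcases hab with ⟨rfl, rfl⟩ | ⟨rfl, rfl⟩ <;> rfl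
  rcases eq_or_ne b 0 with rfl | hb0
  · simp_all [ENNReal.div_zero]
  rcases eq_or_ne b ⊤ with rfl | hbt
  · exact le_top
  simpa using (ENNReal.div_le_iff hb0 hbt).1 h

section Degree

variable {X : Type*} (φ : Set X → ℝ≥0∞)

lemma pratio_le_degPFin {F : Set X} (hF : F.Finite) : pratio (φ F) (hat φ F) ≤ degPFin φ :=
  le_iSup₂ (f := fun (A : Set X) (_ : A.Finite) => pratio (φ A) (hat φ A)) F hF

lemma one_le_degPFin : 1 ≤ degPFin φ :=
  (one_le_pratio_zero _).trans (hat_empty φ ▸ pratio_le_degPFin φ Set.finite_empty)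

lemma degPFin_le_degP : degPFin φ ≤ degP φ :=
  iSup₂_le fun A _ => le_iSup (fun A => pratio (φ A) (hat φ A)) A

lemma degP_le_degPSigma : degP φ ≤ degPSigma φ :=
  iSup_le fun A => (pratio_anti _ (hatSigma_le_hat φ A)).trans
    (le_iSup (fun A => pratio (φ A) (hatSigma φ A)) A)

lemma hat_eq_self_iff_degP_eq_one : (∀ A, hat φ A = φ A) ↔ degP φ = 1 := by
  constructor
  · intro h
    simp only [degP, h, pratio_self, ciSup_const]
  · intro h A
    refine le_antisymm (hat_le_self φ A) (le_of_pratio_le_one ?_)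
    exact h ▸ le_iSup (fun A => pratio (φ A) (hat φ A)) A

variable {φ}

lemma IsLSC.pratio_le_degPFin_of_hat_le (hφ : IsLSC φ) {A : Set X} {c : ℝ≥0∞}
    (hc : ∀ F ⊆ A, F.Finite → hat φ F ≤ c) : pratio (φ A) c ≤ degPFin φ := by
  rw [pratio]
  split_ifs
  · exact one_le_degPFin φ
  · rw [hφ A]
    simp only [ENNReal.iSup_div]
    refine iSup₂_le fun F hF => ?_
    calc φ F / c ≤ φ F / hat φ F := ENNReal.div_le_div_left (hc F hF.1 hF.2) _
      _ ≤ pratio (φ F) (hat φ F) := div_le_pratio _ _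
      _ ≤ degPFin φ := pratio_le_degPFin φ hF.2

lemma IsLSC.degPFin_eq_degP (hφ : IsLSC φ) : degPFin φ = degP φ :=
  le_antisymm (degPFin_le_degP φ) <|
    iSup_le fun _ => hφ.pratio_le_degPFin_of_hat_le fun _ hFA _ => hat_mono φ hFA

lemma IsLSC.degP_eq_degPSigma (hφ : IsLSC φ) : degP φ = degPSigma φ := by
  refine le_antisymm (degP_le_degPSigma φ) ?_
  rw [← hφ.degPFin_eq_degP]
  exact iSup_le fun _ => hφ.pratio_le_degPFin_of_hat_le fun F hFA hF =>
    (hat_le_hatSigma_of_finite φ hF).trans (hatSigma_mono φ hFA)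

end Degree

theorem stmt11_general {X : Type*} (φ : Set X → ℝ≥0∞) :
    (1 ≤ degPFin φ ∧ degPFin φ ≤ degP φ ∧ degP φ ≤ degPSigma φ ∧ degPSigma φ ≤ ⊤) ∧
    ∀ ψ : Set ℕ → ℝ≥0∞, IsSubmeasure ψ → IsLSC ψ →
      degPFin ψ = degP ψ ∧ degP ψ = degPSigma ψ ∧
      ((∀ A, hat ψ A = ψ A) ↔ degPFin ψ = 1) := by
  refine ⟨⟨one_le_degPFin φ, degPFin_le_degP φ, degP_le_degPSigma φ, le_top⟩, fun ψ _ hψ => ?_⟩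
  rw [hψ.degPFin_eq_degP]
  exact ⟨rfl, hψ.degP_eq_degPSigma, hat_eq_self_iff_degP_eq_one ψ⟩

/-- For every submeasure `φ` on `X`: `1 ≤ P_Fin φ ≤ P φ ≤ P_σ φ ≤ ∞`. Moreover, for every
lsc submeasure `ψ` on `ω`: `P_Fin ψ = P ψ = P_σ ψ` and `ψ` is nonpathological iff
`P_Fin ψ = 1`. -/
theorem stmt11 {X : Type*} (φ : Set X → ℝ≥0∞) (hφ : IsSubmeasure φ) :
    (1 ≤ degPFin φ ∧ degPFin φ ≤ degP φ ∧ degP φ ≤ degPSigma φ ∧ degPSigma φ ≤ ⊤) ∧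
    ∀ ψ : Set ℕ → ℝ≥0∞, IsSubmeasure ψ → IsLSC ψ →
      degPFin ψ = degP ψ ∧ degP ψ = degPSigma ψ ∧
      ((∀ A, hat ψ A = ψ A) ↔ degPFin ψ = 1) :=
  stmt11_general φ
end
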